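/- Dumbbell minimization: let 0 < λ₃ < λ₂ < λ₁ < 1/2 with λ₁+λ₂+λ₃ = 1, and define g(A₁,A₂) = A₁(λ₁−A₁) + A₂(λ₂−A₂) + (1/2−A₁−A₂)(1/2−λ₁−λ₂+A₁+A₂) on the polygon C̃ = {(A₁,A₂) : 0 ≤ A₁ ≤ λ₁, 0 ≤ A₂ ≤ λ₂, 1/2−λ₃ ≤ A₁+A₂ ≤ 1/2}. Then the minimum of g on C̃ is attained exactly at the points (λ₁, 0) and (0, λ₂). -/

import Mathlib

/-!
Writing `s = A₁ + A₂`, the restriction of `g` to a line `s = const` is a concave quadratic with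
leading coefficient `-2`, so on the part of that line inside `C̃` it lies above the chord joining
its two endpoints, strictly in between. These endpoints lie on the edges `A₁ = 0`, `A₂ = 0`,
`A₁ = λ₁`, `A₂ = λ₂`, and on each of them `g - (1/2 - λ₁)(1/2 - λ₂)` factors as a nonnegative linear
factor, vanishing only at `(λ₁, 0)` or `(0, λ₂)`, times a positive one.
-/

noncomputable def dumbbell (l1 l2 a b : ℝ) : ℝ :=
  a * (l1 - a) + b * (l2 - b) + (1/2 - a - b) * (1/2 - l1 - l2 + a + b)

def DumbbellBound (l1 l2 x y : ℝ) : Prop :=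
  (1/2 - l1) * (1/2 - l2) ≤ dumbbell l1 l2 x y ∧
    (dumbbell l1 l2 x y = (1/2 - l1) * (1/2 - l2) → x = l1 ∧ y = 0 ∨ x = 0 ∧ y = l2)

theorem le_and_eq_endpoint_of_interp {f : ℝ → ℝ} {k p q a c : ℝ} (hk : 0 < k)
    (hpa : p ≤ a) (haq : a ≤ q)
    (hf : (q - p) * f a = (q - a) * f p + (a - p) * f q + k * (q - p) * (a - p) * (q - a))
    (hp : c ≤ f p) (hq : c ≤ f q) :
    c ≤ f a ∧ (f a = c → a = p ∧ f p = c ∨ a = q ∧ f q = c) := by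
  rcases (hpa.trans haq).eq_or_lt with rfl | hpq
  · obtain rfl : a = p := le_antisymm haq hpa
    exact ⟨hp, fun h ↦ Or.inl ⟨rfl, h⟩⟩
  have hchord : 0 ≤ (q - a) * (f p - c) + (a - p) * (f q - c) :=
    add_nonneg (mul_nonneg (by linarith) (by linarith)) (mul_nonneg (by linarith) (by linarith))
  have hbulge : 0 ≤ k * (q - p) * (a - p) * (q - a) := by
    have := sub_nonneg.2 hpa; have := sub_nonneg.2 haq; have := sub_pos.2 hpq; positivity
  refine ⟨?_, fun hfa ↦ ?_⟩
  · have : 0 ≤ (q - p) * (f a - c) := by linarith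
    linarith [(mul_nonneg_iff_of_pos_left (sub_pos.2 hpq)).1 this]
  · have hzero : k * (q - p) * (a - p) * (q - a) = 0 := by
      rw [hfa] at hf; linarith
    simp only [mul_eq_zero, hk.ne', (sub_pos.2 hpq).ne', sub_eq_zero, false_or] at hzero
    rcases hzero with rfl | rfl
    exacts [Or.inl ⟨rfl, hfa⟩, Or.inr ⟨rfl, hfa⟩]

theorem le_and_eq_of_eq_add_mul {x m u v : ℝ} (h : x = m + u * v) (hu : 0 ≤ u) (hv : 0 < v) :
    m ≤ x ∧ (x = m → u = 0) :=
  ⟨by nlinarith, fun hx ↦ by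
    rw [hx, left_eq_add, mul_eq_zero] at h
    exact h.resolve_right hv.ne'⟩

section

variable (l1 l2 : ℝ)

theorem dumbbell_interp (s p q a : ℝ) :
    (q - p) * dumbbell l1 l2 a (s - a) =
      (q - a) * dumbbell l1 l2 p (s - p) + (a - p) * dumbbell l1 l2 q (s - q) +
        2 * (q - p) * (a - p) * (q - a) := by
  unfold dumbbell; ring

theorem dumbbell_zero_left (b : ℝ) :
    dumbbell l1 l2 0 b = (1/2 - l1) * (1/2 - l2) + (l2 - b) * (2 * b - l1) := by
  unfold dumbbell; ring

theorem dumbbell_zero_right (a : ℝ) :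
    dumbbell l1 l2 a 0 = (1/2 - l1) * (1/2 - l2) + (l1 - a) * (2 * a - l2) := by
  unfold dumbbell; ring

theorem dumbbell_self_left (b : ℝ) :
    dumbbell l1 l2 l1 b = (1/2 - l1) * (1/2 - l2) + b * (2 * l2 - l1 - 2 * b) := by
  unfold dumbbell; ring

theorem dumbbell_self_right (a : ℝ) :
    dumbbell l1 l2 a l2 = (1/2 - l1) * (1/2 - l2) + a * (2 * l1 - l2 - 2 * a) := by
  unfold dumbbell; ring

theorem dumbbellBound_of_endpoints {s p q a : ℝ} (hpa : p ≤ a) (haq : a ≤ q)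
    (hp : DumbbellBound l1 l2 p (s - p)) (hq : DumbbellBound l1 l2 q (s - q)) :
    DumbbellBound l1 l2 a (s - a) := by
  obtain ⟨hle, heq⟩ := le_and_eq_endpoint_of_interp (f := fun x ↦ dumbbell l1 l2 x (s - x))
    two_pos hpa haq (dumbbell_interp l1 l2 s p q a) hp.1 hq.1
  refine ⟨hle, fun h ↦ ?_⟩
  rcases heq h with ⟨rfl, hp'⟩ | ⟨rfl, hq'⟩
  exacts [hp.2 hp', hq.2 hq']

end

theorem dumbbellBound_of_boundary {l1 l2 l3 a b : ℝ} (h32 : l3 < l2) (h21 : l2 < l1)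
    (hsum : l1 + l2 + l3 = 1) (ha : 0 ≤ a) (hal : a ≤ l1) (hb : 0 ≤ b) (hbl : b ≤ l2)
    (hlo : 1/2 - l3 ≤ a + b) (hhi : a + b ≤ 1/2) (hbd : a = 0 ∨ b = 0 ∨ a = l1 ∨ b = l2) :
    DumbbellBound l1 l2 a b := by
  rcases hbd with h | h | h | h <;> subst h
  · obtain ⟨hle, heq⟩ := le_and_eq_of_eq_add_mul (dumbbell_zero_left l1 l2 b)
      (sub_nonneg.2 hbl) (by linarith)
    exact ⟨hle, fun h ↦ Or.inr ⟨rfl, by linarith [heq h]⟩⟩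
  · obtain ⟨hle, heq⟩ := le_and_eq_of_eq_add_mul (dumbbell_zero_right l1 l2 a)
      (sub_nonneg.2 hal) (by linarith)
    exact ⟨hle, fun h ↦ Or.inl ⟨by linarith [heq h], rfl⟩⟩
  · obtain ⟨hle, heq⟩ := le_and_eq_of_eq_add_mul (dumbbell_self_left a l2 b) hb (by linarith)
    exact ⟨hle, fun h ↦ Or.inl ⟨rfl, heq h⟩⟩
  · obtain ⟨hle, heq⟩ := le_and_eq_of_eq_add_mul (dumbbell_self_right l1 b a) ha (by linarith)
    exact ⟨hle, fun h ↦ Or.inr ⟨heq h, rfl⟩⟩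

theorem dumbbellBound_of_mem {l1 l2 l3 a b : ℝ} (h32 : l3 < l2) (h21 : l2 < l1)
    (hsum : l1 + l2 + l3 = 1) (ha : 0 ≤ a) (hal : a ≤ l1) (hb : 0 ≤ b) (hbl : b ≤ l2)
    (hlo : 1/2 - l3 ≤ a + b) (hhi : a + b ≤ 1/2) :
    DumbbellBound l1 l2 a b := by
  have bdry := fun x y ↦ dumbbellBound_of_boundary (a := x) (b := y) h32 h21 hsum
  suffices DumbbellBound l1 l2 a (a + b - a) by rwa [add_sub_cancel_left] at this
  -- `p` and `q` are where the line `x + y = a + b` leaves the hexagon.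
  rcases le_total (a + b) l2 with hs2 | hs2
  · refine dumbbellBound_of_endpoints l1 l2 (p := 0) (q := a + b) ha (by linarith)
      (bdry _ _ ?_ ?_ ?_ ?_ ?_ ?_ ?_) (bdry _ _ ?_ ?_ ?_ ?_ ?_ ?_ ?_) <;> first | linarith | simp
  rcases le_total (a + b) l1 with hs1 | hs1
  · refine dumbbellBound_of_endpoints l1 l2 (p := a + b - l2) (q := a + b) (by linarith)
      (by linarith) (bdry _ _ ?_ ?_ ?_ ?_ ?_ ?_ ?_) (bdry _ _ ?_ ?_ ?_ ?_ ?_ ?_ ?_) <;>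
      first | linarith | simp
  · refine dumbbellBound_of_endpoints l1 l2 (p := a + b - l2) (q := l1) (by linarith)
      hal (bdry _ _ ?_ ?_ ?_ ?_ ?_ ?_ ?_) (bdry _ _ ?_ ?_ ?_ ?_ ?_ ?_ ?_) <;> first | linarith | simp

theorem stmt_13 (l1 l2 l3 : ℝ)
    (h32 : l3 < l2) (h21 : l2 < l1) (h1 : l1 < 1/2)
    (hsum : l1 + l2 + l3 = 1)
    (g : ℝ → ℝ → ℝ)
    (hg : ∀ A1 A2, g A1 A2 =
      A1 * (l1 - A1) + A2 * (l2 - A2) +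
      (1/2 - A1 - A2) * (1/2 - l1 - l2 + A1 + A2))
    (Ct : Set (ℝ × ℝ))
    (hCt : Ct = {p : ℝ × ℝ | 0 ≤ p.1 ∧ p.1 ≤ l1 ∧ 0 ≤ p.2 ∧ p.2 ≤ l2 ∧
      1/2 - l3 ≤ p.1 + p.2 ∧ p.1 + p.2 ≤ 1/2}) :
    (∀ p ∈ Ct, g l1 0 ≤ g p.1 p.2) ∧
    g 0 l2 = g l1 0 ∧ ((l1, (0:ℝ)) ∈ Ct ∧ ((0:ℝ), l2) ∈ Ct) ∧
    (∀ p ∈ Ct, g p.1 p.2 = g l1 0 → p = (l1, (0:ℝ)) ∨ p = ((0:ℝ), l2)) := by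
  obtain rfl : g = dumbbell l1 l2 := funext₂ hg
  have hB : dumbbell l1 l2 l1 0 = (1/2 - l1) * (1/2 - l2) := by simp [dumbbell_zero_right]
  have hE : dumbbell l1 l2 0 l2 = (1/2 - l1) * (1/2 - l2) := by simp [dumbbell_zero_left]
  have hbound : ∀ p ∈ Ct, DumbbellBound l1 l2 p.1 p.2 := by
    rw [hCt]
    rintro ⟨a, b⟩ ⟨ha, hal, hb, hbl, hlo, hhi⟩
    exact dumbbellBound_of_mem h32 h21 hsum ha hal hb hbl hlo hhi
  refine ⟨fun p hp ↦ hB ▸ (hbound p hp).1, hE.trans hB.symm, ?_, fun p hp h ↦ ?_⟩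
  · simp only [hCt, Set.mem_ofPred_eq]
    refine ⟨⟨?_, ?_, ?_, ?_, ?_, ?_⟩, ?_, ?_, ?_, ?_, ?_, ?_⟩ <;> linarith
  · rcases (hbound p hp).2 (h.trans hB) with ⟨ha, hb⟩ | ⟨ha, hb⟩
    exacts [Or.inl (Prod.ext ha hb), Or.inr (Prod.ext ha hb)]
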